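/- arXiv:alg-geom/9310006 — 2 statements merged into one kernel-verified Lean document; each statement's English description precedes it below -/
import Mathlib

section
/- (Abel's theorem for 𝒦ₘ, necessity) Let (g₀,…,g_{m−1}) ∈ 𝒦ₘ, and write g_j(u) = α_j·u^{ℓ_j}·∏_{i=1}^{e_j}(u − λᵢ^{(j)})/∏_{k=1}^{f_j}(u − μₖ^{(j)}) with all α_j, λᵢ^{(j)}, μₖ^{(j)} nonzero. Then: (1) Σ_j (e_j − f_j) = 0; (2) ∏_j (∏ᵢ λᵢ^{(j)} / ∏ₖ μₖ^{(j)}) = 1; (3) Σ_j j·(e_j − f_j) ≡ 0 (mod m). -/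
open Polynomial

/-- The order of vanishing of a rational function at `u = 0`
(positive for zeros, negative for poles). -/
noncomputable def ord0 (g : RatFunc ℂ) : ℤ :=
  (g.num.rootMultiplicity 0 : ℤ) - g.denom.rootMultiplicity 0

/-- The order of vanishing of a rational function at `u = ∞`, i.e. of `g(1/v)` at `v = 0`. -/
noncomputable def ordInf (g : RatFunc ℂ) : ℤ := -g.intDegree

/-- The leading coefficient of the Laurent expansion of `g` at `u = 0`, i.e. the value of
`g(u)/u^{n₀(g)}` at `u = 0`. -/
noncomputable def c0 (g : RatFunc ℂ) : ℂ :=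
  g.num.coeff (g.num.rootMultiplicity 0) / g.denom.coeff (g.denom.rootMultiplicity 0)

/-- The leading coefficient of the Laurent expansion of `g` at `u = ∞`, i.e. the value of
`g(u)·u^{n_∞(g)}` at `u = ∞`. -/
noncomputable def cInf (g : RatFunc ℂ) : ℂ := g.num.leadingCoeff / g.denom.leadingCoeff

/-- The order of vanishing of a rational function at `x`. -/
noncomputable def ordAt (x : ℂ) (g : RatFunc ℂ) : ℤ :=
  (g.num.rootMultiplicity x : ℤ) - g.denom.rootMultiplicity x

/-- The function group `𝒦ₘ` of an `I_m` fiber: `m`-tuples of nonzero rational functions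
with matching orders and leading Laurent coefficients at the nodes, whose orders sum to
zero around the cycle. -/
noncomputable def Kgroup (m : ℕ) [NeZero m] : Set (ZMod m → (RatFunc ℂ)ˣ) :=
  {g | (∀ j, ordInf (g j : RatFunc ℂ) + ord0 (g (j + 1) : RatFunc ℂ) = 0) ∧
       (∀ j, cInf (g j : RatFunc ℂ) = c0 (g (j + 1) : RatFunc ℂ)) ∧
       (∑ j, ord0 (g j : RatFunc ℂ)) = 0}

lemma ratfunc_key (p q : ℂ[X]) (hp : p ≠ 0) (hq : q ≠ 0) (g : RatFunc ℂ)
    (hg : g = algebraMap ℂ[X] (RatFunc ℂ) p / algebraMap ℂ[X] (RatFunc ℂ) q) :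
    ord0 g = (p.natTrailingDegree : ℤ) - q.natTrailingDegree ∧
    c0 g = p.trailingCoeff / q.trailingCoeff ∧
    g.intDegree = (p.natDegree : ℤ) - q.natDegree ∧
    cInf g = p.leadingCoeff / q.leadingCoeff := by
  have hg0 : g ≠ 0 := by
    rw [hg]
    exact div_ne_zero (RatFunc.algebraMap_ne_zero hp) (RatFunc.algebraMap_ne_zero hq)
  have hnum : g.num ≠ 0 := RatFunc.num_ne_zero hg0
  have hden : g.denom ≠ 0 := g.denom_ne_zero
  have hcross : g.num * q = p * g.denom := by
    apply RatFunc.algebraMap_injective ℂ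
    rw [map_mul, map_mul,
      ← div_eq_div_iff (RatFunc.algebraMap_ne_zero hden) (RatFunc.algebraMap_ne_zero hq),
      RatFunc.num_div_denom]
    exact hg
  have hntd : g.num.natTrailingDegree + q.natTrailingDegree
      = p.natTrailingDegree + g.denom.natTrailingDegree := by
    rw [← natTrailingDegree_mul hnum hq, ← natTrailingDegree_mul hp hden, hcross]
  have htc : g.num.trailingCoeff * q.trailingCoeff = p.trailingCoeff * g.denom.trailingCoeff := by
    rw [← trailingCoeff_mul, ← trailingCoeff_mul, hcross]
  have hnd : g.num.natDegree + q.natDegree = p.natDegree + g.denom.natDegree := by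
    rw [← natDegree_mul hnum hq, ← natDegree_mul hp hden, hcross]
  have hlc : g.num.leadingCoeff * q.leadingCoeff = p.leadingCoeff * g.denom.leadingCoeff := by
    rw [← leadingCoeff_mul, ← leadingCoeff_mul, hcross]
  have tcq : q.trailingCoeff ≠ 0 := mt trailingCoeff_eq_zero.mp hq
  have tcd : g.denom.trailingCoeff ≠ 0 := mt trailingCoeff_eq_zero.mp hden
  have lcq : q.leadingCoeff ≠ 0 := leadingCoeff_ne_zero.mpr hq
  have lcd : g.denom.leadingCoeff ≠ 0 := leadingCoeff_ne_zero.mpr hden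
  refine ⟨?_, ?_, ?_, ?_⟩
  · unfold ord0
    rw [rootMultiplicity_eq_natTrailingDegree', rootMultiplicity_eq_natTrailingDegree']
    omega
  · unfold c0
    rw [rootMultiplicity_eq_natTrailingDegree', rootMultiplicity_eq_natTrailingDegree']
    show g.num.trailingCoeff / g.denom.trailingCoeff = _
    field_simp
    linear_combination htc
  · unfold RatFunc.intDegree
    omega
  · unfold cInf
    field_simp
    linear_combination hlc

lemma tc_helper (p : Polynomial ℂ) (h : p.natTrailingDegree = 0) :
    p.trailingCoeff = p.coeff 0 := by rw [Polynomial.trailingCoeff, h]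

lemma factored_data (ℓ : ℤ) (α : ℂ) (hα : α ≠ 0) {e f : ℕ}
    (lam : Fin e → ℂ) (hlam : ∀ i, lam i ≠ 0) (mu : Fin f → ℂ) (hmu : ∀ k, mu k ≠ 0)
    (g : RatFunc ℂ)
    (hg : g = RatFunc.C α * RatFunc.X ^ ℓ * (∏ i, (RatFunc.X - RatFunc.C (lam i))) /
      (∏ k, (RatFunc.X - RatFunc.C (mu k)))) :
    ord0 g = ℓ ∧ c0 g = α * (∏ i, -lam i) / (∏ k, -mu k) ∧
    g.intDegree = ℓ + e - f ∧ cInf g = α := by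
  set a : ℕ := ℓ.toNat with ha
  set b : ℕ := (-ℓ).toNat with hb
  set p : Polynomial ℂ := Polynomial.C α * Polynomial.X ^ a * ∏ i, (Polynomial.X - Polynomial.C (lam i)) with hp
  set q : Polynomial ℂ := Polynomial.X ^ b * ∏ k, (Polynomial.X - Polynomial.C (mu k)) with hq
  have hPne : (∏ i, (Polynomial.X - Polynomial.C (lam i))) ≠ 0 :=
    Finset.prod_ne_zero_iff.mpr fun i _ => Polynomial.X_sub_C_ne_zero _
  have hQne : (∏ k, (Polynomial.X - Polynomial.C (mu k))) ≠ 0 :=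
    Finset.prod_ne_zero_iff.mpr fun k _ => Polynomial.X_sub_C_ne_zero _
  have hpne : p ≠ 0 := mul_ne_zero (mul_ne_zero (by simpa using hα) (pow_ne_zero _ Polynomial.X_ne_zero)) hPne
  have hqne : q ≠ 0 := mul_ne_zero (pow_ne_zero _ Polynomial.X_ne_zero) hQne
  -- express g as a ratio of polynomials
  have hX : (RatFunc.X : RatFunc ℂ) ^ ℓ = RatFunc.X ^ a / RatFunc.X ^ b := by
    have hXne : (RatFunc.X : RatFunc ℂ) ≠ 0 := by
      rw [← RatFunc.algebraMap_X]
      exact RatFunc.algebraMap_ne_zero Polynomial.X_ne_zero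
    rw [← zpow_natCast (RatFunc.X : RatFunc ℂ) a, ← zpow_natCast (RatFunc.X : RatFunc ℂ) b,
      ← zpow_sub₀ hXne]
    congr 1
    omega
  have hmapP : algebraMap (Polynomial ℂ) (RatFunc ℂ) (∏ i, (Polynomial.X - Polynomial.C (lam i)))
      = ∏ i, (RatFunc.X - RatFunc.C (lam i)) := by
    rw [map_prod]
    exact Finset.prod_congr rfl fun i _ => by
      rw [map_sub, RatFunc.algebraMap_X, RatFunc.algebraMap_C]
  have hmapQ : algebraMap (Polynomial ℂ) (RatFunc ℂ) (∏ k, (Polynomial.X - Polynomial.C (mu k)))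
      = ∏ k, (RatFunc.X - RatFunc.C (mu k)) := by
    rw [map_prod]
    exact Finset.prod_congr rfl fun k _ => by
      rw [map_sub, RatFunc.algebraMap_X, RatFunc.algebraMap_C]
  have hg' : g = algebraMap (Polynomial ℂ) (RatFunc ℂ) p / algebraMap (Polynomial ℂ) (RatFunc ℂ) q := by
    rw [hg, hp, hq, map_mul, map_mul, map_mul, map_pow, map_pow, RatFunc.algebraMap_C,
      RatFunc.algebraMap_X, hmapP, hmapQ, hX]
    have h1 : (RatFunc.X : RatFunc ℂ) ^ b ≠ 0 := by
      apply pow_ne_zero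
      rw [← RatFunc.algebraMap_X]
      exact RatFunc.algebraMap_ne_zero Polynomial.X_ne_zero
    have h2 : (∏ k, (RatFunc.X - RatFunc.C (mu k))) ≠ 0 := by
      rw [← hmapQ]
      exact RatFunc.algebraMap_ne_zero hQne
    field_simp
  obtain ⟨h1, h2, h3, h4⟩ := ratfunc_key p q hpne hqne g hg'
  -- compute the invariants of p and q
  have hntdP : (∏ i, (Polynomial.X - Polynomial.C (lam i))).natTrailingDegree = 0 := by
    rw [Polynomial.natTrailingDegree_eq_zero]
    right
    rw [Polynomial.coeff_zero_eq_eval_zero, Polynomial.eval_prod]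
    simp only [Polynomial.eval_sub, Polynomial.eval_X, Polynomial.eval_C, zero_sub]
    exact Finset.prod_ne_zero_iff.mpr fun i _ => neg_ne_zero.mpr (hlam i)
  have hntdQ : (∏ k, (Polynomial.X - Polynomial.C (mu k))).natTrailingDegree = 0 := by
    rw [Polynomial.natTrailingDegree_eq_zero]
    right
    rw [Polynomial.coeff_zero_eq_eval_zero, Polynomial.eval_prod]
    simp only [Polynomial.eval_sub, Polynomial.eval_X, Polynomial.eval_C, zero_sub]
    exact Finset.prod_ne_zero_iff.mpr fun k _ => neg_ne_zero.mpr (hmu k)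
  have hntdp : p.natTrailingDegree = a := by
    rw [hp, Polynomial.natTrailingDegree_mul (mul_ne_zero (by simpa using hα)
      (pow_ne_zero _ Polynomial.X_ne_zero)) hPne,
      Polynomial.natTrailingDegree_mul (by simpa using hα) (pow_ne_zero _ Polynomial.X_ne_zero),
      Polynomial.natTrailingDegree_C, Polynomial.natTrailingDegree_X_pow, hntdP]
    omega
  have hntdq : q.natTrailingDegree = b := by
    rw [hq, Polynomial.natTrailingDegree_mul (pow_ne_zero _ Polynomial.X_ne_zero) hQne,
      Polynomial.natTrailingDegree_X_pow, hntdQ]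
    omega
  have htcP : (∏ i, (Polynomial.X - Polynomial.C (lam i))).trailingCoeff = ∏ i, -lam i := by
    rw [tc_helper _ hntdP, Polynomial.coeff_zero_eq_eval_zero, Polynomial.eval_prod]
    simp
  have htcQ : (∏ k, (Polynomial.X - Polynomial.C (mu k))).trailingCoeff = ∏ k, -mu k := by
    rw [tc_helper _ hntdQ, Polynomial.coeff_zero_eq_eval_zero, Polynomial.eval_prod]
    simp
  have htcXpow : ∀ n : ℕ, ((Polynomial.X : Polynomial ℂ) ^ n).trailingCoeff = 1 := by
    intro n
    rw [Polynomial.trailingCoeff, Polynomial.natTrailingDegree_X_pow,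
      Polynomial.coeff_X_pow, if_pos rfl]
  have htcC : (Polynomial.C α).trailingCoeff = α := by
    rw [Polynomial.trailingCoeff, Polynomial.natTrailingDegree_C, Polynomial.coeff_C_zero]
  have htcp : p.trailingCoeff = α * ∏ i, -lam i := by
    rw [hp, Polynomial.trailingCoeff_mul, Polynomial.trailingCoeff_mul, htcC, htcXpow, htcP,
      mul_one]
  have htcq : q.trailingCoeff = ∏ k, -mu k := by
    rw [hq, Polynomial.trailingCoeff_mul, htcXpow, htcQ, one_mul]
  have hndP : (∏ i, (Polynomial.X - Polynomial.C (lam i))).natDegree = e := by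
    rw [Polynomial.natDegree_prod _ _ fun i _ => Polynomial.X_sub_C_ne_zero _]
    simp
  have hndQ : (∏ k, (Polynomial.X - Polynomial.C (mu k))).natDegree = f := by
    rw [Polynomial.natDegree_prod _ _ fun k _ => Polynomial.X_sub_C_ne_zero _]
    simp
  have hndp : p.natDegree = a + e := by
    rw [hp, Polynomial.natDegree_mul (mul_ne_zero (by simpa using hα)
      (pow_ne_zero _ Polynomial.X_ne_zero)) hPne,
      Polynomial.natDegree_mul (by simpa using hα) (pow_ne_zero _ Polynomial.X_ne_zero),
      Polynomial.natDegree_C, Polynomial.natDegree_X_pow, hndP, zero_add]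
  have hndq : q.natDegree = b + f := by
    rw [hq, Polynomial.natDegree_mul (pow_ne_zero _ Polynomial.X_ne_zero) hQne,
      Polynomial.natDegree_X_pow, hndQ]
  have hlcP : (∏ i, (Polynomial.X - Polynomial.C (lam i))).leadingCoeff = 1 :=
    (monic_prod_of_monic _ _ fun i _ => Polynomial.monic_X_sub_C _).leadingCoeff
  have hlcQ : (∏ k, (Polynomial.X - Polynomial.C (mu k))).leadingCoeff = 1 :=
    (monic_prod_of_monic _ _ fun k _ => Polynomial.monic_X_sub_C _).leadingCoeff
  have hlcp : p.leadingCoeff = α := by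
    rw [hp, Polynomial.leadingCoeff_mul, Polynomial.leadingCoeff_mul, Polynomial.leadingCoeff_C,
      Polynomial.leadingCoeff_X_pow, hlcP, mul_one, mul_one]
  have hlcq : q.leadingCoeff = 1 := by
    rw [hq, Polynomial.leadingCoeff_mul, Polynomial.leadingCoeff_X_pow, hlcQ, one_mul]
  refine ⟨?_, ?_, ?_, ?_⟩
  · rw [h1, hntdp, hntdq]; omega
  · rw [h2, htcp, htcq]
  · rw [h3, hndp, hndq]; push_cast; omega
  · rw [h4, hlcp, hlcq, div_one]

/-- Abel's theorem for `𝒦ₘ`, necessity: for `(g₀,…,g_{m-1}) ∈ 𝒦ₘ` written in factored form,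
the degrees sum to zero, the product of the root/pole ratios is `1`, and the weighted sum
`Σ j·(e_j - f_j)` vanishes mod `m`. -/
theorem abel_necessity (m : ℕ) [NeZero m]
    (e f : ZMod m → ℕ) (ℓ : ZMod m → ℤ) (α : ZMod m → ℂ) (hα : ∀ j, α j ≠ 0)
    (lam : (j : ZMod m) → Fin (e j) → ℂ) (hlam : ∀ j i, lam j i ≠ 0)
    (mu : (j : ZMod m) → Fin (f j) → ℂ) (hmu : ∀ j k, mu j k ≠ 0)
    (g : ZMod m → (RatFunc ℂ)ˣ) (hmem : g ∈ Kgroup m)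
    (hg : ∀ j, (g j : RatFunc ℂ) = RatFunc.C (α j) * RatFunc.X ^ (ℓ j) *
      (∏ i, (RatFunc.X - RatFunc.C (lam j i))) /
      (∏ k, (RatFunc.X - RatFunc.C (mu j k)))) :
    (∑ j, ((e j : ℤ) - (f j : ℤ))) = 0 ∧
    (∏ j, (∏ i, lam j i) / (∏ k, mu j k)) = 1 ∧
    (m : ℤ) ∣ ∑ j, (j.val : ℤ) * ((e j : ℤ) - (f j : ℤ)) := by
  obtain ⟨hA, hB, hC⟩ := hmem
  have key : ∀ j, ord0 (g j : RatFunc ℂ) = ℓ j ∧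
      c0 (g j : RatFunc ℂ) = α j * (∏ i, -lam j i) / (∏ k, -mu j k) ∧
      (g j : RatFunc ℂ).intDegree = ℓ j + e j - f j ∧ cInf (g j : RatFunc ℂ) = α j :=
    fun j => factored_data (ℓ j) (α j) (hα j) (lam j) (hlam j) (mu j) (hmu j) _ (hg j)
  have hrec : ∀ j : ZMod m, ℓ (j + 1) = ℓ j + e j - f j := by
    intro j
    have h := hA j
    unfold ordInf at h
    rw [(key j).2.2.1, (key (j + 1)).1] at h
    omega
  have hsum : ∑ j : ZMod m, ℓ j = 0 := by
    rw [← hC]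
    exact Finset.sum_congr rfl fun j _ => ((key j).1).symm
  -- Part 1
  have h1 : (∑ j, ((e j : ℤ) - (f j : ℤ))) = 0 := by
    have heq : ∀ j : ZMod m, ((e j : ℤ) - (f j : ℤ)) = ℓ (j + 1) - ℓ j := fun j => by
      have := hrec j; omega
    rw [Finset.sum_congr rfl fun j _ => heq j, Finset.sum_sub_distrib,
      Fintype.sum_equiv (Equiv.addRight (1 : ZMod m)) (fun j => ℓ (j + 1)) ℓ (fun j => rfl),
      sub_self]
  -- Part 2
  have hMune : ∀ j : ZMod m, (∏ k, -mu j k) ≠ 0 :=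
    fun j => Finset.prod_ne_zero_iff.mpr fun k _ => neg_ne_zero.mpr (hmu j k)
  have hB' : ∀ j : ZMod m, α j * (∏ k, -mu (j + 1) k) = α (j + 1) * (∏ i, -lam (j + 1) i) := by
    intro j
    have h := hB j
    rw [(key j).2.2.2, (key (j + 1)).2.1] at h
    rw [eq_div_iff (hMune (j + 1))] at h
    linear_combination h
  have hprodeq : (∏ j : ZMod m, α j) * ∏ j : ZMod m, (∏ k, -mu j k)
      = (∏ j : ZMod m, α j) * ∏ j : ZMod m, (∏ i, -lam j i) := by
    have h := Finset.prod_congr rfl (fun j (_ : j ∈ Finset.univ) => hB' j)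
    rw [Finset.prod_mul_distrib, Finset.prod_mul_distrib,
      Fintype.prod_equiv (Equiv.addRight (1 : ZMod m)) (fun j => ∏ k, -mu (j + 1) k)
        (fun j => ∏ k, -mu j k) (fun j => rfl),
      Fintype.prod_equiv (Equiv.addRight (1 : ZMod m)) (fun j => ∏ i, -lam (j + 1) i)
        (fun j => ∏ i, -lam j i) (fun j => rfl),
      Fintype.prod_equiv (Equiv.addRight (1 : ZMod m)) (fun j => α (j + 1)) α
        (fun j => rfl)] at h
    exact h
  have hPQ : ∏ j : ZMod m, (∏ i, -lam j i) = ∏ j : ZMod m, (∏ k, -mu j k) :=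
    (mul_left_cancel₀ (Finset.prod_ne_zero_iff.mpr fun j _ => hα j) hprodeq).symm
  have hsign : ∀ (n : ℕ) (v : Fin n → ℂ), (∏ i, -v i) = (-1) ^ n * ∏ i, v i := by
    intro n v
    rw [Finset.prod_congr rfl fun i (_ : i ∈ Finset.univ) => (neg_one_mul (v i)).symm,
      Finset.prod_mul_distrib, Finset.prod_const, Finset.card_univ, Fintype.card_fin]
  have hef : ∑ j : ZMod m, e j = ∑ j : ZMod m, f j := by
    have h := h1
    rw [Finset.sum_sub_distrib] at h
    have h' : ((∑ j : ZMod m, e j : ℕ) : ℤ) = ((∑ j : ZMod m, f j : ℕ) : ℤ) := by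
      push_cast
      omega
    exact_mod_cast h'
  have hlmmu : ∏ j : ZMod m, (∏ i, lam j i) = ∏ j : ZMod m, (∏ k, mu j k) := by
    have h := hPQ
    rw [Finset.prod_congr rfl (fun j (_ : j ∈ Finset.univ) => hsign (e j) (lam j)),
      Finset.prod_congr rfl (fun j (_ : j ∈ Finset.univ) => hsign (f j) (mu j)),
      Finset.prod_mul_distrib, Finset.prod_mul_distrib,
      Finset.prod_pow_eq_pow_sum, Finset.prod_pow_eq_pow_sum, hef] at h
    exact mul_left_cancel₀ (pow_ne_zero _ (by norm_num)) h
  have h2 : (∏ j, (∏ i, lam j i) / (∏ k, mu j k)) = 1 := by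
    rw [Finset.prod_div_distrib, hlmmu, div_self]
    exact Finset.prod_ne_zero_iff.mpr fun j _ =>
      Finset.prod_ne_zero_iff.mpr fun k _ => hmu j k
  refine ⟨h1, h2, ?_⟩
  -- Part 3
  rw [← ZMod.intCast_zmod_eq_zero_iff_dvd]
  push_cast
  simp only [ZMod.natCast_val, ZMod.cast_id]
  have hLrec : ∀ j : ZMod m, ((e j : ZMod m)) - (f j : ZMod m)
      = ((ℓ (j + 1) : ℤ) : ZMod m) - ((ℓ j : ℤ) : ZMod m) := by
    intro j
    have h := congrArg (fun z : ℤ => (z : ZMod m)) (hrec j)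
    push_cast at h
    linear_combination -h
  have hLsum : ∑ j : ZMod m, ((ℓ j : ℤ) : ZMod m) = 0 := by
    have h := congrArg (fun z : ℤ => (z : ZMod m)) hsum
    push_cast at h
    exact h
  calc ∑ j : ZMod m, j * ((e j : ZMod m) - (f j : ZMod m))
      = ∑ j : ZMod m, (j * ((ℓ (j + 1) : ℤ) : ZMod m) - j * ((ℓ j : ℤ) : ZMod m)) :=
        Finset.sum_congr rfl fun j _ => by rw [hLrec j]; ring
    _ = (∑ j : ZMod m, j * ((ℓ (j + 1) : ℤ) : ZMod m))
        - ∑ j : ZMod m, j * ((ℓ j : ℤ) : ZMod m) := Finset.sum_sub_distrib _ _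
    _ = (∑ j : ZMod m, (j - 1) * ((ℓ j : ℤ) : ZMod m))
        - ∑ j : ZMod m, j * ((ℓ j : ℤ) : ZMod m) := by
          congr 1
          exact Fintype.sum_equiv (Equiv.addRight (1 : ZMod m)) _ _ (fun j => by
            simp [Equiv.coe_addRight])
    _ = ∑ j : ZMod m, (-1) * ((ℓ j : ℤ) : ZMod m) := by
          rw [← Finset.sum_sub_distrib]
          exact Finset.sum_congr rfl fun j _ => by ring
    _ = 0 := by rw [← Finset.mul_sum, hLsum, mul_zero]
end

section
/- Let m ≥ 1, k ≥ 1, ζ a primitive m-th root of unity, and 1 ≤ α ≤ m−1 with components indexed mod mk. Then the mk-tuple given by g₀(u) = u^α/(u−1)^m, g_j(u) = u^{α−m} for 1 ≤ j ≤ αk−1, g_{αk}(u) = (−1)^m·u^{α−m}·(u−ζ)^m, and g_j(u) = (−1)^m·u^α for αk+1 ≤ j ≤ mk−1, lies in 𝒦_{mk}, and its divisor is m·(ζ, αk) − m·(1, 0). -/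
open Polynomial

lemma num_denom_coprime {p q : ℂ[X]} (hq : q.Monic) (h : IsCoprime p q) :
    RatFunc.num (algebraMap ℂ[X] (RatFunc ℂ) p / algebraMap ℂ[X] (RatFunc ℂ) q) = p ∧
    RatFunc.denom (algebraMap ℂ[X] (RatFunc ℂ) p / algebraMap ℂ[X] (RatFunc ℂ) q) = q := by
  have hg : gcd p q = 1 := by
    rw [← normalize_gcd, normalize_eq_one]
    exact (gcd_isUnit_iff p q).mpr h
  refine ⟨?_, ?_⟩ <;>
    simp [RatFunc.num_div, RatFunc.denom_div _ hq.ne_zero, hg, EuclideanDomain.div_one,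
      hq.leadingCoeff]

lemma rm_sub_pow (c : ℂ) (a : ℕ) (x : ℂ) :
    rootMultiplicity x (((X : ℂ[X]) - C c) ^ a) = if x = c then a else 0 := by
  split_ifs with h
  · subst h; exact rootMultiplicity_X_sub_C_pow x a
  · exact rootMultiplicity_eq_zero (by simp [IsRoot, sub_ne_zero.mpr h, pow_ne_zero])

lemma rm_X_pow (a : ℕ) (x : ℂ) :
    rootMultiplicity x ((X : ℂ[X]) ^ a) = if x = 0 then a else 0 := by
  have : ((X : ℂ[X])) ^ a = ((X : ℂ[X]) - C 0) ^ a := by simp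
  rw [this, rm_sub_pow]

lemma rm_C_mul (c : ℂ) (p : ℂ[X]) (hp : C c * p ≠ 0) (x : ℂ) :
    rootMultiplicity x (C c * p) = rootMultiplicity x p := by
  rw [rootMultiplicity_mul hp, rootMultiplicity_C, zero_add]

lemma neg_sub_pow_eq (c : ℂ) (a : ℕ) :
    ((C c - X : ℂ[X])) ^ a = C ((-1) ^ a) * ((X : ℂ[X]) - C c) ^ a := by
  have : (C c - X : ℂ[X]) = -1 * (X - C c) := by ring
  rw [this, mul_pow]; congr 1; rw [map_pow, map_neg, map_one]

lemma rm_c_sub_pow (c : ℂ) (a : ℕ) (x : ℂ) :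
    rootMultiplicity x (((C c : ℂ[X]) - X) ^ a) = if x = c then a else 0 := by
  rw [neg_sub_pow_eq, rm_C_mul _ _ (by
    apply mul_ne_zero
    · simpa using pow_ne_zero a (neg_ne_zero.mpr (one_ne_zero (α := ℂ)))
    · exact pow_ne_zero _ (X_sub_C_ne_zero c)), rm_sub_pow]
open Polynomial

lemma rm_one : rootMultiplicity (0:ℂ) (1:ℂ[X]) = 0 := by
  rw [← C_1, rootMultiplicity_C]

lemma coprime_X_sub (c : ℂ) (hc : c ≠ 0) : IsCoprime ((C c : ℂ[X]) - X) X := by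
  refine ⟨C c⁻¹, C c⁻¹, ?_⟩
  rw [mul_sub]
  ring_nf
  rw [← C_mul, inv_mul_cancel₀ hc, C_1]

-- type A : X^α / (X-1)^m
lemma invA (m α : ℕ) (hα : 1 ≤ α) (hm : 1 ≤ m) :
    ord0 (RatFunc.X ^ α / (RatFunc.X - RatFunc.C 1) ^ m : RatFunc ℂ) = α ∧
    ordInf (RatFunc.X ^ α / (RatFunc.X - RatFunc.C 1) ^ m : RatFunc ℂ) = (m : ℤ) - α ∧
    c0 (RatFunc.X ^ α / (RatFunc.X - RatFunc.C 1) ^ m : RatFunc ℂ) = (-1) ^ m ∧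
    cInf (RatFunc.X ^ α / (RatFunc.X - RatFunc.C 1) ^ m : RatFunc ℂ) = 1 ∧
    ∀ x : ℂ, x ≠ 0 → ordAt x (RatFunc.X ^ α / (RatFunc.X - RatFunc.C 1) ^ m : RatFunc ℂ)
      = -(if x = 1 then (m : ℤ) else 0) := by
  have hrw : (RatFunc.X ^ α / (RatFunc.X - RatFunc.C 1) ^ m : RatFunc ℂ)
      = algebraMap ℂ[X] (RatFunc ℂ) (X ^ α) / algebraMap ℂ[X] (RatFunc ℂ) ((X - C 1) ^ m) := by
    rw [map_pow, map_pow, map_sub, RatFunc.algebraMap_X, RatFunc.algebraMap_C]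
  have hcop : IsCoprime ((X : ℂ[X]) ^ α) ((X - C 1) ^ m) :=
    IsCoprime.pow (⟨1, -1, by rw [C_1]; ring⟩)
  obtain ⟨hn, hd⟩ := num_denom_coprime ((monic_X_sub_C (1:ℂ)).pow m) hcop
  rw [hrw]
  have hrm : rootMultiplicity 0 (((X : ℂ[X]) - C 1) ^ m) = 0 := by
    rw [rm_sub_pow]; simp
  refine ⟨?_, ?_, ?_, ?_, ?_⟩
  · rw [ord0, hn, hd, rm_X_pow, hrm]; simp
  · rw [ordInf, RatFunc.intDegree, hn, hd, natDegree_pow, natDegree_pow, natDegree_X,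
      natDegree_X_sub_C]
    push_cast; ring
  · rw [c0, hn, hd, rm_X_pow, hrm, coeff_zero_eq_eval_zero, if_pos rfl, coeff_X_pow, if_pos rfl]
    simp only [eval_pow, eval_sub, eval_X, eval_C, zero_sub, one_div]
    rw [← inv_pow, inv_neg, inv_one]
  · rw [cInf, hn, hd, leadingCoeff_pow, leadingCoeff_pow, (monic_X_sub_C (1:ℂ)).leadingCoeff]
    simp
  · intro x hx
    rw [ordAt, hn, hd, rm_X_pow, rm_sub_pow, if_neg hx]
    split_ifs <;> simp

-- type B : X^(α-m), α < m
lemma invB (m α : ℕ) (hα : 1 ≤ α) (hαm : α < m) :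
    ord0 (RatFunc.X ^ ((α : ℤ) - m) : RatFunc ℂ) = (α : ℤ) - m ∧
    ordInf (RatFunc.X ^ ((α : ℤ) - m) : RatFunc ℂ) = (m : ℤ) - α ∧
    c0 (RatFunc.X ^ ((α : ℤ) - m) : RatFunc ℂ) = 1 ∧
    cInf (RatFunc.X ^ ((α : ℤ) - m) : RatFunc ℂ) = 1 ∧
    ∀ x : ℂ, x ≠ 0 → ordAt x (RatFunc.X ^ ((α : ℤ) - m) : RatFunc ℂ) = 0 := by
  have hrw : (RatFunc.X ^ ((α : ℤ) - m) : RatFunc ℂ)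
      = algebraMap ℂ[X] (RatFunc ℂ) 1 / algebraMap ℂ[X] (RatFunc ℂ) (X ^ (m - α)) := by
    have h1 : ((α : ℤ) - m) = -((m - α : ℕ) : ℤ) := by
      push_cast [Nat.cast_sub hαm.le]; ring
    rw [h1, zpow_neg, zpow_natCast]
    simp only [map_one, map_pow, RatFunc.algebraMap_X, one_div]
  obtain ⟨hn, hd⟩ := num_denom_coprime (monic_X.pow (m - α)) (isCoprime_one_left)
  rw [hrw]
  refine ⟨?_, ?_, ?_, ?_, ?_⟩
  · rw [ord0, hn, hd, rm_X_pow, rm_one]; simp; omega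
  · rw [ordInf, RatFunc.intDegree, hn, hd, natDegree_pow, natDegree_one, natDegree_X]
    push_cast [Nat.cast_sub hαm.le]; ring
  · rw [c0, hn, hd, rm_X_pow, rm_one]; simp
  · rw [cInf, hn, hd, leadingCoeff_pow, monic_X.leadingCoeff]; simp
  · intro x hx
    rw [ordAt, hn, hd, rm_X_pow, if_neg hx]; simp

-- type C : (-1)^m X^(α-m) (X-ζ)^m
lemma invC (m α : ℕ) (hα : 1 ≤ α) (hαm : α < m) (ζ : ℂ) (hζ0 : ζ ≠ 0) (hζm : ζ ^ m = 1) :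
    ord0 ((-1) ^ m * RatFunc.X ^ ((α : ℤ) - m) * (RatFunc.X - RatFunc.C ζ) ^ m : RatFunc ℂ)
      = (α : ℤ) - m ∧
    ordInf ((-1) ^ m * RatFunc.X ^ ((α : ℤ) - m) * (RatFunc.X - RatFunc.C ζ) ^ m : RatFunc ℂ)
      = -(α : ℤ) ∧
    c0 ((-1) ^ m * RatFunc.X ^ ((α : ℤ) - m) * (RatFunc.X - RatFunc.C ζ) ^ m : RatFunc ℂ) = 1 ∧
    cInf ((-1) ^ m * RatFunc.X ^ ((α : ℤ) - m) * (RatFunc.X - RatFunc.C ζ) ^ m : RatFunc ℂ)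
      = (-1) ^ m ∧
    ∀ x : ℂ, x ≠ 0 →
      ordAt x ((-1) ^ m * RatFunc.X ^ ((α : ℤ) - m) * (RatFunc.X - RatFunc.C ζ) ^ m : RatFunc ℂ)
        = if x = ζ then (m : ℤ) else 0 := by
  have hXne : (RatFunc.X : RatFunc ℂ) ^ (m - α) ≠ 0 := pow_ne_zero _ RatFunc.X_ne_zero
  have hrw : ((-1) ^ m * RatFunc.X ^ ((α : ℤ) - m) * (RatFunc.X - RatFunc.C ζ) ^ m : RatFunc ℂ)
      = algebraMap ℂ[X] (RatFunc ℂ) ((C ζ - X) ^ m) / algebraMap ℂ[X] (RatFunc ℂ) (X ^ (m - α)) := by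
    have h1 : ((α : ℤ) - m) = -((m - α : ℕ) : ℤ) := by
      push_cast [Nat.cast_sub hαm.le]; ring
    rw [h1, zpow_neg, zpow_natCast]
    simp only [map_pow, map_sub, RatFunc.algebraMap_X, RatFunc.algebraMap_C]
    rw [eq_div_iff hXne]
    have h2 : ((RatFunc.C ζ : RatFunc ℂ) - RatFunc.X) ^ m
        = (-1) ^ m * (RatFunc.X - RatFunc.C ζ) ^ m := by
      rw [← neg_pow, neg_sub]
    rw [h2]
    field_simp
  have hcop : IsCoprime (((C ζ : ℂ[X]) - X) ^ m) ((X : ℂ[X]) ^ (m - α)) :=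
    IsCoprime.pow (coprime_X_sub ζ hζ0)
  obtain ⟨hn, hd⟩ := num_denom_coprime (monic_X.pow (m - α)) hcop
  rw [hrw]
  have hrm0 : rootMultiplicity 0 (((C ζ : ℂ[X]) - X) ^ m) = 0 := by
    rw [rm_c_sub_pow, if_neg (Ne.symm hζ0)]
  refine ⟨?_, ?_, ?_, ?_, ?_⟩
  · rw [ord0, hn, hd, hrm0, rm_X_pow]; simp; omega
  · rw [ordInf, RatFunc.intDegree, hn, hd, natDegree_pow, natDegree_pow, natDegree_X]
    have : ((C ζ : ℂ[X]) - X).natDegree = 1 := by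
      rw [← neg_sub, natDegree_neg, natDegree_X_sub_C]
    rw [this]
    push_cast [Nat.cast_sub hαm.le]; ring
  · rw [c0, hn, hd, hrm0, rm_X_pow, if_pos rfl, coeff_zero_eq_eval_zero, coeff_X_pow]
    simp [eval_pow, hζm]
  · rw [cInf, hn, hd, leadingCoeff_pow, leadingCoeff_pow, monic_X.leadingCoeff]
    have : ((C ζ : ℂ[X]) - X).leadingCoeff = -1 := by
      rw [← neg_sub, leadingCoeff_neg, (monic_X_sub_C ζ).leadingCoeff]
    rw [this]; simp
  · intro x hx
    rw [ordAt, hn, hd, rm_c_sub_pow, rm_X_pow, if_neg hx]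
    split_ifs <;> simp

-- type D : (-1)^m X^α
lemma invD (m α : ℕ) (hα : 1 ≤ α) :
    ord0 ((-1) ^ m * RatFunc.X ^ α : RatFunc ℂ) = α ∧
    ordInf ((-1) ^ m * RatFunc.X ^ α : RatFunc ℂ) = -(α : ℤ) ∧
    c0 ((-1) ^ m * RatFunc.X ^ α : RatFunc ℂ) = (-1) ^ m ∧
    cInf ((-1) ^ m * RatFunc.X ^ α : RatFunc ℂ) = (-1) ^ m ∧
    ∀ x : ℂ, x ≠ 0 → ordAt x ((-1) ^ m * RatFunc.X ^ α : RatFunc ℂ) = 0 := by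
  have hrw : ((-1) ^ m * RatFunc.X ^ α : RatFunc ℂ)
      = algebraMap ℂ[X] (RatFunc ℂ) (C ((-1) ^ m) * X ^ α) := by
    simp only [map_mul, map_pow, map_neg, map_one, RatFunc.algebraMap_X, RatFunc.algebraMap_C]
  have hc : ((-1 : ℂ)) ^ m ≠ 0 := pow_ne_zero _ (neg_ne_zero.mpr one_ne_zero)
  have hne : (C ((-1 : ℂ) ^ m) : ℂ[X]) * X ^ α ≠ 0 :=
    mul_ne_zero (by simpa using hc) (pow_ne_zero _ X_ne_zero)
  have hrm : ∀ x : ℂ, rootMultiplicity x ((C ((-1 : ℂ) ^ m) : ℂ[X]) * X ^ α)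
      = if x = 0 then α else 0 := fun x => by rw [rm_C_mul _ _ hne, rm_X_pow]
  rw [hrw]
  refine ⟨?_, ?_, ?_, ?_, ?_⟩
  · rw [ord0, RatFunc.num_algebraMap, RatFunc.denom_algebraMap, hrm]; simp
  · rw [ordInf, RatFunc.intDegree, RatFunc.num_algebraMap, RatFunc.denom_algebraMap,
      natDegree_C_mul hc, natDegree_pow, natDegree_X, natDegree_one]
    push_cast; ring
  · rw [c0, RatFunc.num_algebraMap, RatFunc.denom_algebraMap, hrm, if_pos rfl, rm_one,
      coeff_C_mul, coeff_X_pow]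
    simp
  · rw [cInf, RatFunc.num_algebraMap, RatFunc.denom_algebraMap, leadingCoeff_mul,
      leadingCoeff_C, leadingCoeff_pow, monic_X.leadingCoeff]
    simp
  · intro x hx
    rw [ordAt, RatFunc.num_algebraMap, RatFunc.denom_algebraMap, hrm, if_neg hx]
    simp

/-- The explicit `mk`-tuple with `g₀ = u^α/(u-1)^m`, `g_j = u^{α-m}` for `1 ≤ j ≤ αk-1`,
`g_{αk} = (-1)^m·u^{α-m}·(u-ζ)^m`, and `g_j = (-1)^m·u^α` for `αk+1 ≤ j ≤ mk-1`, lies in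
`𝒦_{mk}`, and its divisor is `m·(ζ, αk) - m·(1, 0)`. -/
theorem example_tuple_general (m k : ℕ) (hm : 1 ≤ m) (hk : 1 ≤ k) [NeZero (m * k)]
    (α : ℕ) (hα1 : 1 ≤ α) (hα2 : α ≤ m - 1)
    (ζ : ℂ) (hζ : IsPrimitiveRoot ζ m)
    (g : ZMod (m * k) → (RatFunc ℂ)ˣ)
    (hg0 : (g 0 : RatFunc ℂ) = RatFunc.X ^ α / (RatFunc.X - RatFunc.C 1) ^ m)
    (hg1 : ∀ j : ZMod (m * k), 1 ≤ j.val → j.val ≤ α * k - 1 →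
      (g j : RatFunc ℂ) = RatFunc.X ^ ((α : ℤ) - m))
    (hg2 : ∀ j : ZMod (m * k), j.val = α * k →
      (g j : RatFunc ℂ) =
        (-1) ^ m * RatFunc.X ^ ((α : ℤ) - m) * (RatFunc.X - RatFunc.C ζ) ^ m)
    (hg3 : ∀ j : ZMod (m * k), α * k + 1 ≤ j.val → j.val ≤ m * k - 1 →
      (g j : RatFunc ℂ) = (-1) ^ m * RatFunc.X ^ α) :
    g ∈ Kgroup (m * k) ∧
    ∀ (x : ℂˣ) (j : ZMod (m * k)),
      ordAt (x : ℂ) ((g j : RatFunc ℂ)) =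
        (if (x : ℂ) = ζ ∧ j.val = α * k then (m : ℤ) else 0) -
        (if (x : ℂ) = 1 ∧ j = 0 then (m : ℤ) else 0) := by
  have hm2 : 2 ≤ m := by omega
  have hαm : α < m := by omega
  have hζ0 : ζ ≠ 0 := hζ.ne_zero (by omega)
  have hζm : ζ ^ m = 1 := hζ.pow_eq_one
  have hk0 : 0 < k := hk
  have hN : α * k < m * k := by nlinarith
  have hαk1 : 1 ≤ α * k := Nat.mul_pos (by omega) hk0
  -- classification of the invariants of g j
  have key : ∀ j : ZMod (m * k),
      (ord0 (g j : RatFunc ℂ) = if 1 ≤ j.val ∧ j.val ≤ α * k then (α:ℤ) - m else (α:ℤ)) ∧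
      (ordInf (g j : RatFunc ℂ) = if j.val < α * k then (m:ℤ) - α else -(α:ℤ)) ∧
      (c0 (g j : RatFunc ℂ) = if 1 ≤ j.val ∧ j.val ≤ α * k then 1 else (-1:ℂ)^m) ∧
      (cInf (g j : RatFunc ℂ) = if j.val < α * k then 1 else (-1:ℂ)^m) ∧
      (∀ x : ℂ, x ≠ 0 → ordAt x (g j : RatFunc ℂ) =
        (if x = ζ ∧ j.val = α * k then (m:ℤ) else 0) -
        (if x = 1 ∧ j.val = 0 then (m:ℤ) else 0)) := by
    intro j
    have hjlt : j.val < m * k := ZMod.val_lt j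
    rcases Nat.lt_or_ge j.val 1 with h0 | h1
    · -- case A : j = 0
      have hv : j.val = 0 := by omega
      have hj0 : j = 0 := (ZMod.val_eq_zero j).mp hv
      have hgj : (g j : RatFunc ℂ) = RatFunc.X ^ α / (RatFunc.X - RatFunc.C 1) ^ m := by
        rw [hj0, hg0]
      obtain ⟨e1, e2, e3, e4, e5⟩ := invA m α hα1 hm
      refine ⟨?_, ?_, ?_, ?_, ?_⟩
      · rw [hgj, e1, if_neg (by omega)]
      · rw [hgj, e2, if_pos (by omega)]
      · rw [hgj, e3, if_neg (by omega)]
      · rw [hgj, e4, if_pos (by omega)]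
      · intro x hx
        rw [hgj, e5 x hx]
        by_cases hx1 : x = 1
        · rw [if_pos hx1, if_neg (fun h => by have hcc := h.2; omega), if_pos ⟨hx1, hv⟩]
          ring
        · rw [if_neg hx1, if_neg (fun h => by have hcc := h.2; omega),
            if_neg (fun h => hx1 h.1)]
          ring
    · rcases Nat.lt_or_ge j.val (α * k) with h2 | h3
      · -- case B : 1 ≤ j.val ≤ αk - 1
        have hgj := hg1 j h1 (by omega)
        obtain ⟨e1, e2, e3, e4, e5⟩ := invB m α hα1 hαm
        refine ⟨?_, ?_, ?_, ?_, ?_⟩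
        · rw [hgj, e1, if_pos (by omega)]
        · rw [hgj, e2, if_pos (by omega)]
        · rw [hgj, e3, if_pos (by omega)]
        · rw [hgj, e4, if_pos (by omega)]
        · intro x hx
          rw [hgj, e5 x hx, if_neg (fun h => by have hcc := h.2; omega), if_neg (fun h => by have hcc := h.2; omega)]
          ring
      · rcases Nat.lt_or_ge (α * k) j.val with h4 | h5
        · -- case D : αk + 1 ≤ j.val ≤ mk - 1
          have hgj := hg3 j (by omega) (by omega)
          obtain ⟨e1, e2, e3, e4, e5⟩ := invD m α hα1
          refine ⟨?_, ?_, ?_, ?_, ?_⟩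
          · rw [hgj, e1, if_neg (by omega)]
          · rw [hgj, e2, if_neg (by omega)]
          · rw [hgj, e3, if_neg (by omega)]
          · rw [hgj, e4, if_neg (by omega)]
          · intro x hx
            rw [hgj, e5 x hx, if_neg (fun h => by have hcc := h.2; omega), if_neg (fun h => by have hcc := h.2; omega)]
            ring
        · -- case C : j.val = αk
          have hv : j.val = α * k := by omega
          have hgj := hg2 j hv
          obtain ⟨e1, e2, e3, e4, e5⟩ := invC m α hα1 hαm ζ hζ0 hζm
          refine ⟨?_, ?_, ?_, ?_, ?_⟩
          · rw [hgj, e1, if_pos (by omega)]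
          · rw [hgj, e2, if_neg (by omega)]
          · rw [hgj, e3, if_pos (by omega)]
          · rw [hgj, e4, if_neg (by omega)]
          · intro x hx
            rw [hgj, e5 x hx]
            by_cases hxζ : x = ζ
            · rw [if_pos hxζ, if_pos ⟨hxζ, hv⟩, if_neg (fun h => by have hcc := h.2; omega)]
              ring
            · rw [if_neg hxζ, if_neg (fun h => hxζ h.1),
                if_neg (fun h => by have hcc := h.2; omega)]
              ring
  -- the successor's value
  have hsucc : ∀ j : ZMod (m * k),
      (j + 1).val = if j.val + 1 = m * k then 0 else j.val + 1 := by
    intro j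
    have hjlt : j.val < m * k := ZMod.val_lt j
    have hone : (1 : ZMod (m * k)).val = 1 := by
      have h2 : 1 < m * k := by
        calc 1 < 2 := by omega
        _ ≤ m * k := by calc 2 = 2 * 1 := by ring
                          _ ≤ m * k := Nat.mul_le_mul hm2 hk
      haveI : Fact (1 < m * k) := ⟨h2⟩
      exact ZMod.val_one _
    split_ifs with hlast
    · have hj1 : j + 1 = 0 := by
        have h' : ((j.val + 1 : ℕ) : ZMod (m * k)) = 0 := by
          rw [hlast, ZMod.natCast_self]
        rwa [Nat.cast_add, Nat.cast_one, ZMod.natCast_val, ZMod.cast_id] at h'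
      rw [hj1, ZMod.val_zero]
    · have hlt : j.val + (1 : ZMod (m * k)).val < m * k := by rw [hone]; omega
      rw [ZMod.val_add_of_lt hlt, hone]
  refine ⟨⟨?_, ?_, ?_⟩, ?_⟩
  · intro j
    obtain ⟨-, hI, -, -, -⟩ := key j
    obtain ⟨hO, -, -, -, -⟩ := key (j + 1)
    rw [hI, hO, hsucc j]
    have hjlt : j.val < m * k := ZMod.val_lt j
    split_ifs <;> omega
  · intro j
    obtain ⟨-, -, -, hC, -⟩ := key j
    obtain ⟨-, -, hc, -, -⟩ := key (j + 1)
    rw [hC, hc, hsucc j]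
    have hjlt : j.val < m * k := ZMod.val_lt j
    split_ifs <;> first | rfl | omega
  · rw [Finset.sum_congr rfl (fun j _ => (key j).1)]
    rw [Finset.sum_nbij' (i := fun j : ZMod (m * k) => j.val)
      (j := fun i : ℕ => (i : ZMod (m * k)))
      (t := Finset.range (m * k))
      (g := fun i : ℕ => if 1 ≤ i ∧ i ≤ α * k then (α:ℤ) - m else (α:ℤ))
      (fun a _ => Finset.mem_range.mpr (ZMod.val_lt a))
      (fun a ha => Finset.mem_univ _)
      (fun a _ => by show ((a.val : ℕ) : ZMod (m * k)) = a; rw [ZMod.natCast_val, ZMod.cast_id])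
      (fun a ha => ZMod.val_cast_of_lt (Finset.mem_range.mp ha))
      (fun a _ => rfl)]
    have hsplit : ∀ i : ℕ, (if 1 ≤ i ∧ i ≤ α * k then (α:ℤ) - m else (α:ℤ))
        = (α:ℤ) + (if 1 ≤ i ∧ i ≤ α * k then -(m:ℤ) else 0) := by
      intro i; split_ifs <;> ring
    rw [Finset.sum_congr rfl (fun i _ => hsplit i), Finset.sum_add_distrib, ← Finset.sum_filter]
    have hfilt : (Finset.range (m * k)).filter (fun i => 1 ≤ i ∧ i ≤ α * k)
        = Finset.Icc 1 (α * k) := by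
      ext i
      simp only [Finset.mem_filter, Finset.mem_range, Finset.mem_Icc]
      omega
    rw [hfilt, Finset.sum_const, Finset.sum_const, Nat.card_Icc, Finset.card_range,
      Nat.add_sub_cancel]
    simp only [nsmul_eq_mul]
    push_cast
    ring
  · intro x j
    obtain ⟨-, -, -, -, e5⟩ := key j
    rw [e5 (x : ℂ) x.ne_zero]
    congr 2
    rw [ZMod.val_eq_zero]
end
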